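/- For all integers k, n with 1 ≤ k ≤ n−2, one has F_{k,n}(w) − F_{k+1,n}(w) = G_k(w+x) · G_{n-k}(w+kz) / w. -/

import Mathlib

open Finset MvPolynomial

noncomputable section

/-- The field of rational functions in three variables `w, x, z` over `ℚ`. -/
abbrev F3 : Type := FractionRing (MvPolynomial (Fin 3) ℚ)

/-- the variable `w` -/
def W : F3 := algebraMap (MvPolynomial (Fin 3) ℚ) F3 (X 0)
/-- the variable `x` -/
def Xv : F3 := algebraMap (MvPolynomial (Fin 3) ℚ) F3 (X 1)
/-- the variable `z` -/
def Zv : F3 := algebraMap (MvPolynomial (Fin 3) ℚ) F3 (X 2)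

/-- `G_n(w)`, defined by `G_1(w) = 1/w` and, for `n ≥ 2`,
`G_n(w) = ∑_{k=1}^{n-1} G_k(w) G_{n-k}(w+kz) / (w+(n-1)x)`. -/
def G : ℕ → F3 → F3
  | 0, _ => 0
  | 1, w => 1 / w
  | (n + 2), w =>
      ∑ k ∈ (Finset.Icc 1 (n + 1)).attach,
        G k.1 w * G (n + 2 - k.1) (w + (k.1 : F3) * Zv) / (w + ((n + 1 : ℕ) : F3) * Xv)
  termination_by n _ => n
  decreasing_by
  · have := Finset.mem_Icc.mp k.2; omega
  · have := Finset.mem_Icc.mp k.2; omega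

/-- `F_{k,n}(w)` for `1 ≤ k < n`, defined by `F_{1,n}(w) = G_n(w)` and, for `k ≥ 2`,
`F_{k,n}(w) = ∑_{i=1}^{n-k-1} G_{n-k-i}(w+(k+i)z) F_{k,k+i}(w) / (w+(n-1)x)
  + ∑_{i=1}^{k-1} (w+iz) G_i(w+x) F_{k-i,n-i}(w+iz) / (w(w+(n-1)x))`. -/
def Fkn : ℕ → ℕ → F3 → F3
  | 0, _, _ => 0
  | 1, n, w => G n w
  | (j + 2), n, w =>
      (∑ i ∈ (Finset.Icc 1 (n - (j + 2) - 1)).attach,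
        G (n - (j + 2) - i.1) (w + (((j + 2) + i.1 : ℕ) : F3) * Zv) * Fkn (j + 2) ((j + 2) + i.1) w /
          (w + ((n - 1 : ℕ) : F3) * Xv)) +
      ∑ i ∈ (Finset.Icc 1 (j + 1)).attach,
        (w + (i.1 : F3) * Zv) * G i.1 (w + Xv) * Fkn ((j + 2) - i.1) (n - i.1) (w + (i.1 : F3) * Zv) /
          (w * (w + ((n - 1 : ℕ) : F3) * Xv))
  termination_by k n _ => k + n
  decreasing_by
  · have := Finset.mem_Icc.mp i.2; omega
  · have := Finset.mem_Icc.mp i.2; omega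

/-!
Write `(A ⋆ B)_n(w) = ∑_{i+j=n} A_i(w) B_j(w+iz)` (`tconv`); this twisted convolution is
associative. Sums run over the whole antidiagonal, the extra terms vanishing because `G 0 = 0`.

The recursion for `G` says `(w+(n-1)x) G_n = (G ⋆ G)_n` for `n ≥ 2`. Expanding
`G(·+x) ⋆ (G - G(·+x)) ⋆ G` in both bracketings and using this recursion (and, inductively,
the identity being proved for smaller indices) gives `w G_n(w) = ∑_{j} G_j(w+x) G_{n-j}(w+jz)`.
The same reassociation, applied to the two sums in the recursion for `F`, proves by induction
on `n` the closed form `w F_{k,n}(w) = ∑_{j ≥ k} G_j(w+x) G_{n-j}(w+jz)`, which is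
`tconv Zv (GxFrom k) G n w`. Consecutive tails differ by the single term `j = k`.
-/

section TwistedConvolution

variable {R : Type*} [CommRing R] (z : R)

theorem sum_antidiagonal_antidiagonal_assoc {M : Type*} [AddCommMonoid M] (n : ℕ)
    (f : ℕ → ℕ → ℕ → M) :
    ∑ p ∈ antidiagonal n, ∑ q ∈ antidiagonal p.1, f q.1 q.2 p.2 =
      ∑ p ∈ antidiagonal n, ∑ q ∈ antidiagonal p.2, f p.1 q.1 q.2 := by
  simp only [Finset.sum_sigma']
  apply Finset.sum_nbij' (fun x => ⟨(x.2.1, x.2.2 + x.1.2), (x.2.2, x.1.2)⟩)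
    (fun x => ⟨(x.1.1 + x.2.1, x.2.2), (x.1.1, x.2.1)⟩) <;> aesop (add simp [add_assoc])

theorem sum_antidiagonal_eq_sum_of_subset {M : Type*} [AddCommMonoid M] {n : ℕ}
    (f : ℕ → ℕ → M) {s : Finset ℕ} (hs : s ⊆ range (n + 1))
    (hf : ∀ m ≤ n, m ∉ s → f m (n - m) = 0) :
    ∑ p ∈ antidiagonal n, f p.1 p.2 = ∑ m ∈ s, f m (n - m) := by
  rw [Nat.sum_antidiagonal_eq_sum_range_succ]
  exact (sum_subset hs fun m hm hms => hf m (Nat.lt_succ_iff.mp (mem_range.mp hm)) hms).symm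

def tconv (A B : ℕ → R → R) (n : ℕ) (w : R) : R :=
  ∑ p ∈ antidiagonal n, A p.1 w * B p.2 (w + p.1 * z)

theorem tconv_assoc (A B C : ℕ → R → R) :
    tconv z (tconv z A B) C = tconv z A (tconv z B C) := by
  funext n w
  have hL : tconv z (tconv z A B) C n w = ∑ p ∈ antidiagonal n, ∑ q ∈ antidiagonal p.1,
      A q.1 w * B q.2 (w + q.1 * z) * C p.2 (w + ((q.1 + q.2 : ℕ) : R) * z) := by
    refine sum_congr rfl fun p _ => ?_
    rw [tconv, sum_mul]
    refine sum_congr rfl fun q hq => ?_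
    rw [HasAntidiagonal.mem_antidiagonal.mp hq]
  rw [hL, sum_antidiagonal_antidiagonal_assoc n fun i j c =>
    A i w * B j (w + i * z) * C c (w + ((i + j : ℕ) : R) * z)]
  refine sum_congr rfl fun p _ => ?_
  rw [tconv, mul_sum]
  refine sum_congr rfl fun q _ => ?_
  push_cast
  ring_nf

theorem tconv_sub_left (A B C : ℕ → R → R) (n : ℕ) (w : R) :
    tconv z (A - B) C n w = tconv z A C n w - tconv z B C n w := by
  simp only [tconv, Pi.sub_apply, sub_mul, sum_sub_distrib]

theorem tconv_sub_right (A B C : ℕ → R → R) (n : ℕ) (w : R) :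
    tconv z A (B - C) n w = tconv z A B n w - tconv z A C n w := by
  simp only [tconv, Pi.sub_apply, mul_sub, sum_sub_distrib]

theorem tconv_comp_add (A B : ℕ → R → R) (x : R) (n : ℕ) (w : R) :
    tconv z (fun j v => A j (v + x)) (fun j v => B j (v + x)) n w = tconv z A B n (w + x) := by
  simp only [tconv, add_right_comm _ x]

end TwistedConvolution

-- Every denominator met in the recursions, at every point where they are evaluated, has this form.
def IsGeneric (w : F3) : Prop := ∀ a b : ℕ, w + a * Xv + b * Zv ≠ 0

theorem isGeneric_W : IsGeneric W := by
  intro a b h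
  have hp : (X 0 + (a : MvPolynomial (Fin 3) ℚ) * X 1 + (b : MvPolynomial (Fin 3) ℚ) * X 2) =
      0 := by
    apply IsFractionRing.injective (MvPolynomial (Fin 3) ℚ) F3
    simpa [W, Xv, Zv] using h
  simpa using congrArg (eval fun i => if i = 0 then (1 : ℚ) else 0) hp

namespace IsGeneric

variable {w : F3}

theorem ne_zero (hw : IsGeneric w) : w ≠ 0 := by simpa using hw 0 0

theorem add_X (hw : IsGeneric w) : IsGeneric (w + Xv) := fun a b => by
  convert hw (a + 1) b using 1
  push_cast
  ring

theorem add_natCast_mul_Z (hw : IsGeneric w) (m : ℕ) : IsGeneric (w + m * Zv) := fun a b => by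
  convert hw a (m + b) using 1
  push_cast
  ring

end IsGeneric

theorem G_zero (w : F3) : G 0 w = 0 := by rw [G]

theorem G_one (w : F3) : G 1 w = 1 / w := by rw [G]

theorem G_add_two (m : ℕ) (w : F3) :
    G (m + 2) w = (∑ t ∈ Icc 1 (m + 1), G t w * G (m + 2 - t) (w + t * Zv)) /
      (w + ((m + 1 : ℕ) : F3) * Xv) := by
  rw [G, sum_attach (Icc 1 (m + 1)) fun t =>
    G t w * G (m + 2 - t) (w + t * Zv) / (w + ((m + 1 : ℕ) : F3) * Xv), sum_div]

theorem mul_G_eq_tconv {w : F3} (hw : IsGeneric w) (n : ℕ) :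
    (w + ((n : F3) - 1) * Xv) * G n w = tconv Zv G G n w + if n = 1 then 1 else 0 := by
  rcases n with _ | _ | m
  · simp [tconv, G_zero]
  · simp [tconv, Nat.sum_antidiagonal_succ, G_zero, G_one, hw.ne_zero]
  have hD : w + ((m + 1 : ℕ) : F3) * Xv ≠ 0 := by simpa using hw (m + 1) 0
  have hconv : tconv Zv G G (m + 2) w =
      ∑ t ∈ Icc 1 (m + 1), G t w * G (m + 2 - t) (w + t * Zv) := by
    refine sum_antidiagonal_eq_sum_of_subset (fun a b => G a w * G b (w + a * Zv))
      (fun t ht => by simp only [mem_Icc, mem_range] at ht ⊢; omega) fun t _ hts => ?_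
    obtain rfl | rfl : t = 0 ∨ t = m + 2 := by simp only [mem_Icc] at hts; omega
    all_goals simp [G_zero]
  rw [hconv, G_add_two, show ((m + 1 + 1 : ℕ) : F3) - 1 = ((m + 1 : ℕ) : F3) by push_cast; ring,
    mul_div_cancel₀ _ hD]
  simp

def GxFrom (k j : ℕ) (w : F3) : F3 := if k ≤ j then G j (w + Xv) else 0

theorem GxFrom_zero : GxFrom 0 = fun j w => G j (w + Xv) := by
  funext j w
  simp [GxFrom]

theorem GxFrom_one : GxFrom 1 = GxFrom 0 := by
  funext j w
  rcases j with _ | j <;> simp [GxFrom, G_zero]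

theorem tconv_G_sub_tconv_GxFrom_zero {w : F3} (hw : IsGeneric w) {r : ℕ}
    (hI : w * G r w = tconv Zv (GxFrom 0) G r w + if r = 1 then 1 else 0) :
    tconv Zv G G r w - tconv Zv (GxFrom 0) G r w = ((r : F3) - 1) * Xv * G r w := by
  linear_combination hI - mul_G_eq_tconv hw r

theorem mul_G_eq_tconv_GxFrom_zero_of_lt {s : ℕ} (hs : 2 ≤ s)
    (IH : ∀ r < s, ∀ v, IsGeneric v →
      v * G r v = tconv Zv (GxFrom 0) G r v + if r = 1 then 1 else 0)
    {w : F3} (hw : IsGeneric w) :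
    w * G s w = tconv Zv (GxFrom 0) G s w := by
  set T := tconv Zv (GxFrom 0) (tconv Zv (G - GxFrom 0) G) s w with hT
  have hT₁ : T = ∑ p ∈ antidiagonal s,
      G p.1 (w + Xv) * (((p.2 : F3) - 1) * Xv * G p.2 (w + p.1 * Zv)) := by
    rw [hT, tconv]
    refine sum_congr rfl fun p hp => ?_
    rw [HasAntidiagonal.mem_antidiagonal] at hp
    rcases Nat.eq_zero_or_pos p.1 with h | h
    · simp [GxFrom, h, G_zero]
    rw [tconv_sub_left, tconv_G_sub_tconv_GxFrom_zero (hw.add_natCast_mul_Z _)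
      (IH p.2 (by omega) _ (hw.add_natCast_mul_Z _)), GxFrom_zero]
  have hT₂ : T = ∑ p ∈ antidiagonal s,
      (w * G p.1 w - (w + p.1 * Xv) * G p.1 (w + Xv)) * G p.2 (w + p.1 * Zv) := by
    rw [hT, ← tconv_assoc, tconv]
    refine sum_congr rfl fun p hp => ?_
    rw [HasAntidiagonal.mem_antidiagonal] at hp
    rcases Nat.eq_zero_or_pos p.2 with h | h
    · simp [h, G_zero]
    have hI := IH p.1 (by omega) w hw
    rw [GxFrom_zero] at hI
    rw [tconv_sub_right, GxFrom_zero, tconv_comp_add]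
    linear_combination G p.2 (w + p.1 * Zv) * (mul_G_eq_tconv hw.add_X p.1 - hI)
  have hR : (w + ((s : F3) - 1) * Xv) * G s w = tconv Zv G G s w := by
    simpa [show s ≠ 1 by omega] using mul_G_eq_tconv hw s
  have hD : w + ((s : F3) - 1) * Xv ≠ 0 := by
    simpa [Nat.cast_sub (by omega : 1 ≤ s)] using hw (s - 1) 0
  refine mul_left_cancel₀ hD (sub_eq_zero.mp ?_)
  rw [mul_left_comm, hR, ← sub_self T]
  nth_rw 1 [hT₂]
  rw [hT₁, tconv, tconv, mul_sum, mul_sum, ← sum_sub_distrib, ← sum_sub_distrib]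
  refine sum_congr rfl fun p hp => ?_
  have hs' : (p.1 : F3) + p.2 = s := by exact_mod_cast HasAntidiagonal.mem_antidiagonal.mp hp
  rw [GxFrom_zero, ← hs']
  ring

theorem mul_G_eq_tconv_GxFrom_zero {w : F3} (hw : IsGeneric w) (n : ℕ) :
    w * G n w = tconv Zv (GxFrom 0) G n w + if n = 1 then 1 else 0 := by
  induction n using Nat.strong_induction_on generalizing w with
  | _ s IH =>
    rcases lt_or_ge s 2 with hs | hs
    · interval_cases s
      · simp [tconv, G_zero]
      · simp [tconv, Nat.sum_antidiagonal_succ, GxFrom, G_zero, G_one, hw.ne_zero]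
    · rw [mul_G_eq_tconv_GxFrom_zero_of_lt hs (fun r hr v hv => IH r hr hv) hw]
      simp [show s ≠ 1 by omega]

theorem tconv_GxFrom_of_le {k m : ℕ} (hm : m ≤ k) (w : F3) : tconv Zv (GxFrom k) G m w = 0 := by
  refine sum_eq_zero fun p hp => ?_
  rw [HasAntidiagonal.mem_antidiagonal] at hp
  rcases Nat.eq_zero_or_pos p.2 with h | h
  · simp [h, G_zero]
  · simp [GxFrom, show ¬ k ≤ p.1 by omega]

theorem tconv_GxFrom_sub_tconv_GxFrom_succ {k n : ℕ} (hkn : k ≤ n) (w : F3) :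
    tconv Zv (GxFrom k) G n w - tconv Zv (GxFrom (k + 1)) G n w =
      G k (w + Xv) * G (n - k) (w + k * Zv) := by
  rw [tconv, tconv, ← sum_sub_distrib, Nat.sum_antidiagonal_eq_sum_range_succ
    (fun i j => GxFrom k i w * G j (w + i * Zv) - GxFrom (k + 1) i w * G j (w + i * Zv)),
    sum_eq_single k]
  · simp [GxFrom]
  · intro i _ hik
    rcases lt_or_gt_of_ne hik with h | h
    · simp [GxFrom, show ¬ k ≤ i by omega, show ¬ k + 1 ≤ i by omega]
    · simp [GxFrom, show k ≤ i by omega, show k + 1 ≤ i by omega]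
  · intro hk
    exact absurd (mem_range.mpr (Nat.lt_succ_of_le hkn)) hk

theorem sum_ite_lt_mul_tconv_GxFrom (k n : ℕ) (w : F3) :
    ∑ p ∈ antidiagonal n, (if p.1 < k then G p.1 (w + Xv) else 0) *
        tconv Zv (GxFrom (k - p.1)) G p.2 (w + p.1 * Zv) =
      ∑ p ∈ antidiagonal n, (if k ≤ p.1 then tconv Zv G G p.1 (w + Xv) else 0) *
        G p.2 (w + p.1 * Zv) - tconv Zv (GxFrom k) (tconv Zv (GxFrom 0) G) n w := by
  let φ : ℕ → ℕ → ℕ → F3 := fun i j c =>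
    G i (w + Xv) * G j (w + i * Zv + Xv) * G c (w + i * Zv + j * Zv)
  have hL : ∑ p ∈ antidiagonal n, (if p.1 < k then G p.1 (w + Xv) else 0) *
      tconv Zv (GxFrom (k - p.1)) G p.2 (w + p.1 * Zv) =
      ∑ p ∈ antidiagonal n, ∑ q ∈ antidiagonal p.2,
        if p.1 < k ∧ k ≤ p.1 + q.1 then φ p.1 q.1 q.2 else 0 := by
    refine sum_congr rfl fun p _ => ?_
    rw [tconv, mul_sum]
    refine sum_congr rfl fun q _ => ?_
    simp only [GxFrom, φ]
    split_ifs <;> first | (exfalso; omega) | ring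
  have hR₁ : ∑ p ∈ antidiagonal n, (if k ≤ p.1 then tconv Zv G G p.1 (w + Xv) else 0) *
      G p.2 (w + p.1 * Zv) =
      ∑ p ∈ antidiagonal n, ∑ q ∈ antidiagonal p.2,
        if k ≤ p.1 + q.1 then φ p.1 q.1 q.2 else 0 := by
    rw [← sum_antidiagonal_antidiagonal_assoc n fun i j c => if k ≤ i + j then φ i j c else 0]
    refine sum_congr rfl fun p _ => ?_
    rw [ite_mul, zero_mul, tconv, sum_mul]
    split_ifs with h
    · refine sum_congr rfl fun q hq => ?_
      rw [HasAntidiagonal.mem_antidiagonal] at hq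
      rw [← hq] at h ⊢
      simp only [φ, h, if_true]
      push_cast
      ring_nf
    · refine (sum_eq_zero fun q hq => ?_).symm
      rw [HasAntidiagonal.mem_antidiagonal] at hq
      rw [← hq] at h
      simp [h]
  have hR₂ : tconv Zv (GxFrom k) (tconv Zv (GxFrom 0) G) n w =
      ∑ p ∈ antidiagonal n, ∑ q ∈ antidiagonal p.2,
        if k ≤ p.1 then φ p.1 q.1 q.2 else 0 := by
    refine sum_congr rfl fun p _ => ?_
    rw [tconv, mul_sum]
    refine sum_congr rfl fun q _ => ?_
    simp only [GxFrom, φ, zero_le, if_true]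
    split_ifs <;> ring
  rw [hL, hR₁, hR₂, ← sum_sub_distrib]
  refine sum_congr rfl fun p _ => ?_
  rw [← sum_sub_distrib]
  refine sum_congr rfl fun q _ => ?_
  split_ifs <;> first | (exfalso; omega) | ring

theorem tconv_GxFrom_tconv_sub_add_sum {k : ℕ} (hk : 2 ≤ k) {w : F3} (hw : IsGeneric w)
    (n : ℕ) :
    tconv Zv (GxFrom k) (tconv Zv G G - tconv Zv (GxFrom 0) G) n w +
        ∑ p ∈ antidiagonal n, (if k ≤ p.1 then tconv Zv G G p.1 (w + Xv) else 0) *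
          G p.2 (w + p.1 * Zv) =
      (w + ((n : F3) - 1) * Xv) * tconv Zv (GxFrom k) G n w := by
  rw [tconv, tconv, ← sum_add_distrib, mul_sum]
  refine sum_congr rfl fun p hp => ?_
  have hn : (p.1 : F3) + p.2 = n := by exact_mod_cast HasAntidiagonal.mem_antidiagonal.mp hp
  simp only [GxFrom, Pi.sub_apply]
  split_ifs with h
  · have hR := mul_G_eq_tconv hw.add_X p.1
    rw [if_neg (by omega), add_zero] at hR
    rw [tconv_G_sub_tconv_GxFrom_zero (hw.add_natCast_mul_Z _)
      (mul_G_eq_tconv_GxFrom_zero (hw.add_natCast_mul_Z _) _), ← hR, ← hn]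
    ring
  · simp

theorem mul_Fkn_of_two_le {k : ℕ} (hk : 2 ≤ k) (n : ℕ) {w : F3} (hw : w ≠ 0)
    (hD : w + ((n - 1 : ℕ) : F3) * Xv ≠ 0) :
    w * (w + ((n - 1 : ℕ) : F3) * Xv) * Fkn k n w =
      w * ∑ i ∈ Icc 1 (n - k - 1),
          G (n - k - i) (w + ((k + i : ℕ) : F3) * Zv) * Fkn k (k + i) w +
        ∑ i ∈ Icc 1 (k - 1),
          (w + i * Zv) * G i (w + Xv) * Fkn (k - i) (n - i) (w + i * Zv) := by
  have hmul : ∀ A B : F3, w * (w + ((n - 1 : ℕ) : F3) * Xv) *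
      (A / (w + ((n - 1 : ℕ) : F3) * Xv) + B / (w * (w + ((n - 1 : ℕ) : F3) * Xv))) =
        w * A + B :=
    fun A B => by field_simp
  obtain ⟨j, rfl⟩ : ∃ j, k = j + 2 := ⟨k - 2, by omega⟩
  rw [Fkn, sum_attach (Icc 1 (n - (j + 2) - 1)) fun i =>
      G (n - (j + 2) - i) (w + ((j + 2 + i : ℕ) : F3) * Zv) * Fkn (j + 2) (j + 2 + i) w /
        (w + ((n - 1 : ℕ) : F3) * Xv),
    sum_attach (Icc 1 (j + 1)) fun i =>
      (w + i * Zv) * G i (w + Xv) * Fkn (j + 2 - i) (n - i) (w + i * Zv) /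
        (w * (w + ((n - 1 : ℕ) : F3) * Xv)),
    ← sum_div, ← sum_div, hmul]
  rfl

theorem mul_sum_G_mul_Fkn {k n : ℕ} {w : F3}
    (hF : ∀ m, k < m → m < n → w * Fkn k m w = tconv Zv (GxFrom k) G m w) :
    w * ∑ i ∈ Icc 1 (n - k - 1),
        G (n - k - i) (w + ((k + i : ℕ) : F3) * Zv) * Fkn k (k + i) w =
      tconv Zv (GxFrom k) (tconv Zv G G) n w := by
  rw [← tconv_assoc, tconv, mul_sum, sum_antidiagonal_eq_sum_of_subset
    (fun m c => tconv Zv (GxFrom k) G m w * G c (w + m * Zv))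
    (s := (Icc 1 (n - k - 1)).map (addLeftEmbedding k)), sum_map]
  · refine sum_congr rfl fun i hi => ?_
    rw [mem_Icc] at hi
    rw [addLeftEmbedding_apply, ← hF (k + i) (by omega) (by omega), Nat.sub_sub]
    ring
  · intro m hm
    simp only [map_add_left_Icc, mem_Icc, mem_range] at hm ⊢
    omega
  · intro m _ hms
    simp only [map_add_left_Icc, mem_Icc] at hms
    rcases le_or_gt m k with h | h
    · rw [tconv_GxFrom_of_le h, zero_mul]
    · simp [show n - m = 0 by omega, G_zero]

theorem sum_mul_G_mul_Fkn {k n : ℕ} (hkn : k ≤ n) {w : F3}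
    (hF : ∀ i, 0 < i → i < k →
      (w + i * Zv) * Fkn (k - i) (n - i) (w + i * Zv) =
        tconv Zv (GxFrom (k - i)) G (n - i) (w + i * Zv)) :
    ∑ i ∈ Icc 1 (k - 1), (w + i * Zv) * G i (w + Xv) * Fkn (k - i) (n - i) (w + i * Zv) =
      ∑ p ∈ antidiagonal n, (if p.1 < k then G p.1 (w + Xv) else 0) *
        tconv Zv (GxFrom (k - p.1)) G p.2 (w + p.1 * Zv) := by
  rw [sum_antidiagonal_eq_sum_of_subset (fun i s => (if i < k then G i (w + Xv) else 0) *
    tconv Zv (GxFrom (k - i)) G s (w + i * Zv)) (s := Icc 1 (k - 1))]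
  · refine sum_congr rfl fun i hi => ?_
    rw [mem_Icc] at hi
    rw [if_pos (by omega), ← hF i (by omega) (by omega)]
    ring
  · intro m hm
    simp only [mem_Icc, mem_range] at hm ⊢
    omega
  · intro m _ hms
    simp only [mem_Icc] at hms
    rcases Nat.eq_zero_or_pos m with rfl | h
    · simp [G_zero]
    · simp [show ¬ m < k by omega]

theorem mul_Fkn_eq (n k : ℕ) (hk : 1 ≤ k) (hkn : k < n) {w : F3} (hw : IsGeneric w) :
    w * Fkn k n w = tconv Zv (GxFrom k) G n w := by
  induction n using Nat.strong_induction_on generalizing k w with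
  | _ n IH =>
  obtain rfl | hk2 : k = 1 ∨ 2 ≤ k := by omega
  · rw [show Fkn 1 n w = G n w by rw [Fkn], mul_G_eq_tconv_GxFrom_zero hw, GxFrom_one,
      if_neg (by omega), add_zero]
  have hD : w + ((n - 1 : ℕ) : F3) * Xv ≠ 0 := by simpa using hw (n - 1) 0
  refine mul_left_cancel₀ hD ?_
  rw [mul_left_comm, ← mul_assoc, mul_Fkn_of_two_le hk2 n hw.ne_zero hD,
    mul_sum_G_mul_Fkn fun m hkm hmn => IH m hmn k hk hkm hw,
    sum_mul_G_mul_Fkn hkn.le fun i hi hik =>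
      IH (n - i) (by omega) (k - i) (by omega) (by omega) (hw.add_natCast_mul_Z i),
    sum_ite_lt_mul_tconv_GxFrom, Nat.cast_pred (by omega),
    ← tconv_GxFrom_tconv_sub_add_sum hk2 hw, tconv_sub_right]
  ring

theorem F_succ_diff (k n : ℕ) (hk : 1 ≤ k) (hkn : k + 2 ≤ n) :
    Fkn k n W - Fkn (k + 1) n W = G k (W + Xv) * G (n - k) (W + (k : F3) * Zv) / W := by
  rw [eq_div_iff isGeneric_W.ne_zero, sub_mul, mul_comm (Fkn k n W), mul_comm (Fkn (k + 1) n W),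
    mul_Fkn_eq n k hk (by omega) isGeneric_W,
    mul_Fkn_eq n (k + 1) (by omega) (by omega) isGeneric_W,
    tconv_GxFrom_sub_tconv_GxFrom_succ (by omega)]

end
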